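/- Let Γ be a valued structure over a finite domain. Then Γ has a cyclic fractional polymorphism (of some arity ℓ ≥ 2) if and only if Sup(fPol(Γ)) contains a cyclic operation (of some arity ℓ ≥ 2). -/

import Mathlib

/-!
For `f g : C^ℓ → C` let `rotComp f g x = f (g x, g (ρ x), …, g (ρ^(ℓ-1) x))`, `ρ` the cyclic
shift; it is cyclic as soon as `f` or `g` is. If `f ∼ ω` and `g ∼ ν` are drawn from fractional
polymorphisms, `rotComp f g` is distributed as a fractional polymorphism again (the rotations of
the tuples average out), and its weight on non-cyclic operations is at most the product of those
of `ω` and `ν`. If `ω` has a cyclic operation in its support, its non-cyclic weight is `< 1`, so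
composing with `ω` strictly decreases any positive non-cyclic weight. Fractional polymorphisms of a
fixed arity form a compact set, so the non-cyclic weight attains its minimum there, and the
minimum must be `0`: the minimiser is cyclic.
-/

open scoped ENNReal NNReal

/-- The value space `ℚ ∪ {∞}`. -/
abbrev QInf : Type := WithTop ℚ

/-- The embedding of `ℚ ∪ {∞}` into the extended reals. -/
noncomputable def QInf.toE (x : QInf) : EReal :=
  WithTop.recTopCoe ⊤ (fun q : ℚ => ((q : ℝ) : EReal)) x

/-- A relational signature: a collection of relation symbols with arities. -/
structure Signature where
  symbols : Type
  arity : symbols → ℕ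

/-- A valued `τ`-structure with domain `C`. -/
def VStruct (τ : Signature) (C : Type) : Type :=
  ∀ s : τ.symbols, (Fin (τ.arity s) → C) → QInf

/-- A probability distribution on a finite type, given by its weight function. -/
def FinDist {β : Type} [Fintype β] (w : β → ℝ≥0) : Prop :=
  ∑ f : β, w f = 1

/-- Over a finite domain, a fractional operation (given by its weight function `w`)
improves a `k`-ary valued relation `R`:
`Σ_f w(f)·R(f(a^1,…,a^ℓ)) ≤ (1/ℓ)·Σ_j R(a^j)` for all `a^1,…,a^ℓ ∈ C^k`
(where `0·∞ = 0`, computed in the extended reals). -/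
def FinImproves {C : Type} [Fintype C] [DecidableEq C] {ℓ k : ℕ}
    (w : ((Fin ℓ → C) → C) → ℝ≥0) (R : (Fin k → C) → QInf) : Prop :=
  ∀ a : Fin ℓ → Fin k → C,
    (∑ f : (Fin ℓ → C) → C,
        (((w f : ℝ)) : EReal) * QInf.toE (R fun i => f fun j => a j i)) ≤
      (((ℓ : ℝ)⁻¹ : ℝ) : EReal) * ∑ j : Fin ℓ, QInf.toE (R (a j))

/-- A fractional polymorphism of a valued structure over a finite domain: a probability
distribution on the `ℓ`-ary operations improving every valued relation of `Γ`. -/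
def FinFracPol {τ : Signature} {C : Type} [Fintype C] [DecidableEq C]
    (Γ : VStruct τ C) {ℓ : ℕ} (w : ((Fin ℓ → C) → C) → ℝ≥0) : Prop :=
  FinDist w ∧ ∀ s : τ.symbols, FinImproves w (Γ s)

/-- A fractional homomorphism from `Δ` (domain `D`) to `Γ` (domain `C`) over finite
domains: a probability distribution `ν` on the maps `D → C` with
`Σ_g ν(g)·R^Γ(g(a)) ≤ R^Δ(a)` for every symbol and tuple. -/
def FinFracHom {τ : Signature} {D C : Type} [Fintype D] [DecidableEq D] [Fintype C]
    (Δ : VStruct τ D) (Γ : VStruct τ C) (ν : (D → C) → ℝ≥0) : Prop :=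
  FinDist ν ∧
    ∀ (s : τ.symbols) (a : Fin (τ.arity s) → D),
      (∑ g : D → C, (((ν g : ℝ)) : EReal) * QInf.toE (Γ s (g ∘ a))) ≤
        QInf.toE (Δ s a)

/-- A cyclic operation: `f(x_1,…,x_ℓ) = f(x_2,…,x_ℓ,x_1)`. -/
def IsCyclicOp {C : Type} {ℓ : ℕ} (f : (Fin ℓ → C) → C) : Prop :=
  ∀ x : Fin ℓ → C, f x = f (x ∘ finRotate ℓ)

namespace QInf

/-- The rational value of a finite element; `⊤` is sent to the junk value `0`. -/
noncomputable def toReal (x : QInf) : ℝ := (x.untopD 0 : ℚ)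

@[simp] lemma toE_top : (⊤ : QInf).toE = ⊤ := rfl

lemma toE_ne_bot (x : QInf) : x.toE ≠ ⊥ := by
  cases x using WithTop.recTopCoe <;> simp [toE]

lemma toE_of_ne_top {x : QInf} (h : x ≠ ⊤) : x.toE = (x.toReal : EReal) := by
  lift x to ℚ using h
  simp [toE, toReal]

end QInf

lemma EReal.coe_finset_sum {ι : Type*} (s : Finset ι) (f : ι → ℝ) :
    ((∑ i ∈ s, f i : ℝ) : EReal) = ∑ i ∈ s, (f i : EReal) :=
  map_sum (⟨⟨(↑), EReal.coe_zero⟩, EReal.coe_add⟩ : ℝ →+ EReal) f s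

lemma EReal.sum_eq_top_of_ne_bot {ι : Type*} [DecidableEq ι] {s : Finset ι} {f : ι → EReal}
    {i : ι} (hi : i ∈ s) (htop : f i = ⊤) (hbot : ∀ j ∈ s, f j ≠ ⊥) : ∑ j ∈ s, f j = ⊤ := by
  rw [← Finset.add_sum_erase _ _ hi, htop]
  exact EReal.top_add_of_ne_bot <| Finset.sum_induction _ (· ≠ ⊥)
    (fun _ _ ha hb => EReal.add_ne_bot_iff.2 ⟨ha, hb⟩) EReal.zero_ne_bot
    fun j hj => hbot j (Finset.mem_of_mem_erase hj)

lemma coe_mul_toE_ne_bot (c : ℝ≥0) (x : QInf) : ((c : ℝ) : EReal) * x.toE ≠ ⊥ := by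
  rcases eq_zero_or_pos c with rfl | hc
  · simp
  · rcases eq_or_ne x ⊤ with rfl | hx
    · simp [EReal.coe_mul_top_of_pos (NNReal.coe_pos.2 hc)]
    · rw [QInf.toE_of_ne_top hx, ← EReal.coe_mul]
      exact EReal.coe_ne_bot _

lemma coe_mul_toE_of_imp {c : ℝ≥0} {x : QInf} (h : c ≠ 0 → x ≠ ⊤) :
    ((c : ℝ) : EReal) * x.toE = ((c * x.toReal : ℝ) : EReal) := by
  rcases eq_or_ne c 0 with rfl | hc
  · simp
  · rw [QInf.toE_of_ne_top (h hc), EReal.coe_mul]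

lemma sum_coe_mul_toE_le_coe_iff {ι : Type*} [Fintype ι] (c : ι → ℝ≥0) (x : ι → QInf)
    (r : ℝ) :
    ∑ i, ((c i : ℝ) : EReal) * (x i).toE ≤ (r : EReal) ↔
      (∀ i, c i ≠ 0 → x i ≠ ⊤) ∧ ∑ i, (c i : ℝ) * (x i).toReal ≤ r := by
  classical
  by_cases hfin : ∀ i, c i ≠ 0 → x i ≠ ⊤
  · rw [Finset.sum_congr rfl fun i _ => coe_mul_toE_of_imp (hfin i), ← EReal.coe_finset_sum,
      EReal.coe_le_coe_iff]
    exact (and_iff_right hfin).symm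
  · obtain ⟨i, hci, hxi⟩ : ∃ i, c i ≠ 0 ∧ x i = ⊤ := by simpa using hfin
    have hsum : ∑ i, ((c i : ℝ) : EReal) * (x i).toE = ⊤ :=
      EReal.sum_eq_top_of_ne_bot (Finset.mem_univ i)
        (by rw [hxi, QInf.toE_top,
          EReal.coe_mul_top_of_pos (NNReal.coe_pos.2 (pos_iff_ne_zero.2 hci))])
        fun j _ => coe_mul_toE_ne_bot _ _
    simp [hsum, hfin]

section Improvement

variable {C : Type} [Fintype C] [DecidableEq C] {ℓ k : ℕ}

/-- `FinImproves` as a support condition plus a real inequality, imposed only on tuples of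
finite cost (where the right-hand side of `FinImproves` is finite). -/
def RealImproves (w : ((Fin ℓ → C) → C) → ℝ≥0) (R : (Fin k → C) → QInf) : Prop :=
  ∀ a : Fin ℓ → Fin k → C, (∀ j, R (a j) ≠ ⊤) →
    (∀ f, w f ≠ 0 → R (f ∘ Function.swap a) ≠ ⊤) ∧
      ∑ f, (w f : ℝ) * (R (f ∘ Function.swap a)).toReal ≤ (ℓ : ℝ)⁻¹ * ∑ j, (R (a j)).toReal

lemma finImproves_iff_realImproves (w : ((Fin ℓ → C) → C) → ℝ≥0) (R : (Fin k → C) → QInf) :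
    FinImproves w R ↔ RealImproves w R := by
  refine forall_congr' fun a => ?_
  by_cases hfin : ∀ j, R (a j) ≠ ⊤
  · rw [Finset.sum_congr rfl fun j _ => QInf.toE_of_ne_top (hfin j), ← EReal.coe_finset_sum,
      ← EReal.coe_mul]
    exact (sum_coe_mul_toE_le_coe_iff _ _ _).trans (imp_iff_right hfin).symm
  · obtain ⟨j, hj⟩ : ∃ j, R (a j) = ⊤ := by simpa using hfin
    have hℓ : (0 : ℝ) < ℓ := Nat.cast_pos.2 (Fin.pos j)
    have hsum : ∑ j, (R (a j)).toE = ⊤ :=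
      EReal.sum_eq_top_of_ne_bot (Finset.mem_univ j) (by rw [hj, QInf.toE_top])
        fun j _ => QInf.toE_ne_bot _
    rw [hsum, EReal.coe_mul_top_of_pos (inv_pos.2 hℓ)]
    exact iff_of_true le_top fun h => absurd h hfin

lemma isClosed_setOf_realImproves (R : (Fin k → C) → QInf) :
    IsClosed {w : ((Fin ℓ → C) → C) → ℝ≥0 | RealImproves w R} := by
  simp only [RealImproves, Set.ofPred_forall, Set.ofPred_and]
  refine isClosed_iInter fun a => isClosed_iInter fun _ =>
    (isClosed_iInter fun f => ?_).inter (isClosed_le ?_ continuous_const)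
  · by_cases hf : R (f ∘ Function.swap a) = ⊤
    · simpa [hf] using isClosed_eq (continuous_apply f) continuous_const
    · simp [hf]
  · exact continuous_finsetSum _ fun f _ =>
      (NNReal.continuous_coe.comp (continuous_apply f)).mul continuous_const

end Improvement

lemma isCompact_setOf_finDist {β : Type} [Fintype β] : IsCompact {w : β → ℝ≥0 | FinDist w} :=
  isCompact_Icc.of_isClosed_subset
    (isClosed_eq (continuous_finsetSum _ fun f _ => continuous_apply f) continuous_const)
    fun _ hw => ⟨fun _ => zero_le, fun f => hw ▸ Finset.single_le_sum (fun _ _ => zero_le)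
      (Finset.mem_univ f)⟩

lemma isCompact_setOf_finFracPol {τ : Signature} {C : Type} [Fintype C] [DecidableEq C]
    (Γ : VStruct τ C) (ℓ : ℕ) :
    IsCompact {w : ((Fin ℓ → C) → C) → ℝ≥0 | FinFracPol Γ w} := by
  have hP : {w : ((Fin ℓ → C) → C) → ℝ≥0 | FinFracPol Γ w} =
      {w | FinDist w} ∩ ⋂ s, {w | RealImproves w (Γ s)} := by
    ext w
    simp [FinFracPol, finImproves_iff_realImproves]
  rw [hP]
  exact isCompact_setOf_finDist.inter_right
    (isClosed_iInter fun s => isClosed_setOf_realImproves (Γ s))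

section Superposition

variable {C : Type} {n : ℕ}

def rotComp (f g : (Fin (n + 1) → C) → C) : (Fin (n + 1) → C) → C :=
  fun x => f fun r => g fun j => x (j + r)

lemma isCyclicOp_iff_add_one {f : (Fin (n + 1) → C) → C} :
    IsCyclicOp f ↔ ∀ x, f x = f fun j => x (j + 1) := by
  simp only [IsCyclicOp, Function.comp_def, finRotate_apply]

lemma IsCyclicOp.rotComp_left {f : (Fin (n + 1) → C) → C} (hf : IsCyclicOp f)
    (g : (Fin (n + 1) → C) → C) : IsCyclicOp (rotComp f g) := by
  refine isCyclicOp_iff_add_one.2 fun x => (isCyclicOp_iff_add_one.1 hf _).trans ?_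
  simp only [rotComp, add_assoc]

lemma IsCyclicOp.rotComp_right (f : (Fin (n + 1) → C) → C) {g : (Fin (n + 1) → C) → C}
    (hg : IsCyclicOp g) : IsCyclicOp (rotComp f g) := by
  refine isCyclicOp_iff_add_one.2 fun x =>
    congrArg f (funext fun r => (isCyclicOp_iff_add_one.1 hg _).trans ?_)
  simp only [add_right_comm]

end Superposition

section FracComp

variable {C : Type} [Fintype C] [DecidableEq C] {n k : ℕ}

/-- The distribution of `rotComp f g` for independent `f ∼ w` and `g ∼ v`. -/
def fracComp (w v : ((Fin (n + 1) → C) → C) → ℝ≥0) : ((Fin (n + 1) → C) → C) → ℝ≥0 :=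
  fun h => ∑ p : ((Fin (n + 1) → C) → C) × ((Fin (n + 1) → C) → C) with rotComp p.1 p.2 = h,
    w p.1 * v p.2

lemma sum_fracComp_mul (w v : ((Fin (n + 1) → C) → C) → ℝ≥0) (Φ : ((Fin (n + 1) → C) → C) → ℝ) :
    ∑ h, (fracComp w v h : ℝ) * Φ h = ∑ f, ∑ g, (w f : ℝ) * v g * Φ (rotComp f g) := by
  rw [← Fintype.sum_prod_type']
  conv_rhs => rw [← Finset.sum_fiberwise _ fun p : _ × _ => rotComp p.1 p.2]
  refine Finset.sum_congr rfl fun h _ => ?_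
  rw [fracComp, NNReal.coe_sum, Finset.sum_mul]
  refine Finset.sum_congr rfl fun p hp => ?_
  rw [(Finset.mem_filter.1 hp).2, NNReal.coe_mul]

lemma finDist_fracComp {w v : ((Fin (n + 1) → C) → C) → ℝ≥0} (hw : FinDist w) (hv : FinDist v) :
    FinDist (fracComp w v) := by
  have h := sum_fracComp_mul w v 1
  simp only [Pi.one_apply, mul_one, ← Finset.sum_mul_sum, ← NNReal.coe_sum] at h
  rw [FinDist, ← NNReal.coe_inj, h, hw, hv, NNReal.coe_one, one_mul]

lemma exists_of_fracComp_ne_zero {w v : ((Fin (n + 1) → C) → C) → ℝ≥0}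
    {h : (Fin (n + 1) → C) → C} (hh : fracComp w v h ≠ 0) :
    ∃ f g, w f ≠ 0 ∧ v g ≠ 0 ∧ rotComp f g = h := by
  obtain ⟨p, hp, hwv⟩ := Finset.exists_ne_zero_of_sum_ne_zero hh
  exact ⟨p.1, p.2, left_ne_zero_of_mul hwv, right_ne_zero_of_mul hwv, (Finset.mem_filter.1 hp).2⟩

lemma realImproves_fracComp {w v : ((Fin (n + 1) → C) → C) → ℝ≥0} {R : (Fin k → C) → QInf}
    (hw : RealImproves w R) (hv : RealImproves v R) : RealImproves (fracComp w v) R := by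
  intro a ha
  set shift : Fin (n + 1) → Fin (n + 1) → Fin k → C := fun r j => a (j + r)
  have hv' := fun r => hv (shift r) fun j => ha _
  let b (g : (Fin (n + 1) → C) → C) : Fin (n + 1) → Fin k → C :=
    fun r => g ∘ Function.swap (shift r)
  have hb : ∀ g, v g ≠ 0 → ∀ r, R (b g r) ≠ ⊤ := fun g hg r => (hv' r).1 g hg
  -- `rotComp f g` acts on the columns of `a` as `f` acts on the columns of `b g`.
  have hcomp : ∀ f g, rotComp f g ∘ Function.swap a = f ∘ Function.swap (b g) := fun _ _ => rfl
  refine ⟨fun h hh => ?_, ?_⟩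
  · obtain ⟨f, g, hf, hg, rfl⟩ := exists_of_fracComp_ne_zero hh
    rw [hcomp]
    exact (hw (b g) (hb g hg)).1 f hf
  have hinner : ∀ g, (v g : ℝ) * ∑ f, (w f : ℝ) * (R (f ∘ Function.swap (b g))).toReal ≤
      (v g : ℝ) * (((n + 1 : ℕ) : ℝ)⁻¹ * ∑ r, (R (b g r)).toReal) := by
    intro g
    rcases eq_or_ne (v g) 0 with hg | hg
    · simp [hg]
    · exact mul_le_mul_of_nonneg_left (hw (b g) (hb g hg)).2 (v g).2
  have hrot : ∀ r, ∑ j, (R (shift r j)).toReal = ∑ j, (R (a j)).toReal := fun r =>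
    Equiv.sum_comp (Equiv.addRight r) fun j => (R (a j)).toReal
  calc ∑ h, (fracComp w v h : ℝ) * (R (h ∘ Function.swap a)).toReal
      = ∑ g, (v g : ℝ) * ∑ f, (w f : ℝ) * (R (f ∘ Function.swap (b g))).toReal := by
        rw [sum_fracComp_mul, Finset.sum_comm]
        simp only [hcomp, Finset.mul_sum, mul_left_comm, mul_assoc]
    _ ≤ ∑ g, (v g : ℝ) * (((n + 1 : ℕ) : ℝ)⁻¹ * ∑ r, (R (b g r)).toReal) :=
        Finset.sum_le_sum fun g _ => hinner g
    _ = ((n + 1 : ℕ) : ℝ)⁻¹ * ∑ r, ∑ g, (v g : ℝ) * (R (g ∘ Function.swap (shift r))).toReal := by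
        rw [Finset.sum_comm (γ := Fin (n + 1))]
        simp only [Finset.mul_sum, mul_left_comm, b]
    _ ≤ ((n + 1 : ℕ) : ℝ)⁻¹ *
          ∑ r : Fin (n + 1), ((n + 1 : ℕ) : ℝ)⁻¹ * ∑ j, (R (shift r j)).toReal := by
        gcongr with r
        exact (hv' r).2
    _ = ((n + 1 : ℕ) : ℝ)⁻¹ * ∑ j, (R (a j)).toReal := by
        simp only [hrot, Finset.sum_const, Finset.card_univ, Fintype.card_fin, nsmul_eq_mul]
        field_simp

end FracComp

lemma finFracPol_fracComp {τ : Signature} {C : Type} [Fintype C] [DecidableEq C]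
    {Γ : VStruct τ C} {n : ℕ} {w v : ((Fin (n + 1) → C) → C) → ℝ≥0}
    (hw : FinFracPol Γ w) (hv : FinFracPol Γ v) : FinFracPol Γ (fracComp w v) := by
  refine ⟨finDist_fracComp hw.1 hv.1, fun s => ?_⟩
  have hws := hw.2 s
  have hvs := hv.2 s
  rw [finImproves_iff_realImproves] at hws hvs ⊢
  exact realImproves_fracComp hws hvs

section NoncyclicMass

variable {C : Type} [Fintype C] [DecidableEq C] {n : ℕ}

open Classical in
noncomputable def noncyclicMass (w : ((Fin (n + 1) → C) → C) → ℝ≥0) : ℝ :=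
  ∑ f, (w f : ℝ) * if IsCyclicOp f then 0 else 1

lemma continuous_noncyclicMass :
    Continuous (noncyclicMass : (((Fin (n + 1) → C) → C) → ℝ≥0) → ℝ) :=
  continuous_finsetSum _ fun f _ =>
    (NNReal.continuous_coe.comp (continuous_apply f)).mul continuous_const

lemma noncyclicMass_fracComp_le (w v : ((Fin (n + 1) → C) → C) → ℝ≥0) :
    noncyclicMass (fracComp w v) ≤ noncyclicMass w * noncyclicMass v := by
  classical
  rw [noncyclicMass, sum_fracComp_mul, noncyclicMass, noncyclicMass, Finset.sum_mul_sum]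
  refine Finset.sum_le_sum fun f _ => Finset.sum_le_sum fun g _ => ?_
  have hind : (if IsCyclicOp (rotComp f g) then 0 else 1 : ℝ) ≤
      (if IsCyclicOp f then 0 else 1) * (if IsCyclicOp g then 0 else 1) := by
    by_cases hf : IsCyclicOp f
    · simp [hf, hf.rotComp_left g]
    by_cases hg : IsCyclicOp g
    · simp [hg, hg.rotComp_right f]
    simp only [hf, hg, if_false, mul_one]
    split_ifs <;> norm_num
  calc (w f : ℝ) * v g * (if IsCyclicOp (rotComp f g) then 0 else 1)
      ≤ w f * v g * ((if IsCyclicOp f then 0 else 1) * (if IsCyclicOp g then 0 else 1)) := by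
        gcongr
    _ = _ := by ring

lemma noncyclicMass_lt_one {w : ((Fin (n + 1) → C) → C) → ℝ≥0} (hw : FinDist w)
    {f₀ : (Fin (n + 1) → C) → C} (hf₀ : w f₀ ≠ 0) (hcyc : IsCyclicOp f₀) :
    noncyclicMass w < 1 := by
  classical
  have hsum : ∑ f, (w f : ℝ) = 1 := by exact_mod_cast hw
  have hcyclicMass : (w f₀ : ℝ) ≤ ∑ f, (w f : ℝ) * (1 - if IsCyclicOp f then 0 else 1) := by
    refine le_of_eq_of_le (by simp [hcyc])
      (Finset.single_le_sum (fun f _ => ?_) (Finset.mem_univ f₀))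
    split_ifs <;> simp
  simp only [mul_sub, mul_one, Finset.sum_sub_distrib, hsum] at hcyclicMass
  have hpos : (0 : ℝ) < w f₀ := by positivity
  rw [noncyclicMass]
  linarith

lemma isCyclicOp_of_noncyclicMass_nonpos {w : ((Fin (n + 1) → C) → C) → ℝ≥0}
    (hw : noncyclicMass w ≤ 0) {f : (Fin (n + 1) → C) → C} (hf : w f ≠ 0) : IsCyclicOp f := by
  classical
  have hterms : ∀ g ∈ Finset.univ, 0 ≤ (w g : ℝ) * if IsCyclicOp g then 0 else 1 :=
    fun g _ => by positivity
  have hzero := (Finset.sum_eq_zero_iff_of_nonneg hterms).1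
    (le_antisymm hw (Finset.sum_nonneg hterms)) f (Finset.mem_univ f)
  by_contra hnc
  simp [hnc, hf] at hzero

end NoncyclicMass

lemma exists_cyclic_finFracPol {τ : Signature} {C : Type} [Fintype C] [DecidableEq C]
    {Γ : VStruct τ C} {n : ℕ} {w : ((Fin (n + 1) → C) → C) → ℝ≥0} (hw : FinFracPol Γ w)
    {f₀ : (Fin (n + 1) → C) → C} (hf₀ : w f₀ ≠ 0) (hcyc : IsCyclicOp f₀) :
    ∃ W : ((Fin (n + 1) → C) → C) → ℝ≥0, FinFracPol Γ W ∧ ∀ f, W f ≠ 0 → IsCyclicOp f := by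
  obtain ⟨W, hW, hmin⟩ := (isCompact_setOf_finFracPol Γ (n + 1)).exists_isMinOn ⟨w, hw⟩
    continuous_noncyclicMass.continuousOn
  have hle : noncyclicMass W ≤ noncyclicMass w * noncyclicMass W :=
    (isMinOn_iff.1 hmin _ (finFracPol_fracComp hw hW)).trans (noncyclicMass_fracComp_le w W)
  have hlt := noncyclicMass_lt_one hw.1 hf₀ hcyc
  exact ⟨W, hW, fun f => isCyclicOp_of_noncyclicMass_nonpos (by nlinarith)⟩

/-- a valued structure over a finite domain has a cyclic fractional
polymorphism (of some arity `ℓ ≥ 2`) if and only if the support of its fractional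
polymorphisms contains a cyclic operation (of some arity `ℓ ≥ 2`). -/
theorem cyclic_fpol_iff_cyclic_in_support {τ : Signature} {C : Type}
    [Fintype C] [DecidableEq C] (Γ : VStruct τ C) :
    (∃ (ℓ : ℕ) (_ : 2 ≤ ℓ) (w : ((Fin ℓ → C) → C) → ℝ≥0),
        FinFracPol Γ w ∧ ∀ f, w f ≠ 0 → IsCyclicOp f) ↔
      ∃ (ℓ : ℕ) (_ : 2 ≤ ℓ) (w : ((Fin ℓ → C) → C) → ℝ≥0) (f : (Fin ℓ → C) → C),
        FinFracPol Γ w ∧ w f ≠ 0 ∧ IsCyclicOp f := by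
  constructor
  · rintro ⟨ℓ, hℓ, w, hw, hcyc⟩
    obtain ⟨f, -, hf⟩ := Finset.exists_ne_zero_of_sum_ne_zero (hw.1.symm ▸ one_ne_zero)
    exact ⟨ℓ, hℓ, w, f, hw, hf, hcyc f hf⟩
  · rintro ⟨ℓ, hℓ, w, f₀, hw, hf₀, hcyc⟩
    obtain ⟨n, rfl⟩ : ∃ n, ℓ = n + 1 := ⟨ℓ - 1, by omega⟩
    exact ⟨n + 1, hℓ, exists_cyclic_finFracPol hw hf₀ hcyc⟩
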